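/- Let r ≥ 3 and let A = V_2^{(r)} be the configuration with columns (r,0)ᵀ, (r−1,1)ᵀ, (r−2,2)ᵀ, …, (0,r)ᵀ, indexing the variable x_k by the column (r−k+1, k−1)ᵀ for k = 1,…,r+1. Then the binomial f = x_1x_4 − x_2x_3 belongs to the toric ideal I_A, f is not a circuit of I_A, and f is indispensable: the only binomials g ∈ I_A of the form x_1x_4 − m (m a monomial) satisfy g = f, so f is not generated by the other binomials of I_A and hence f (or −f) belongs to every binomial generating set of I_A. -/

import Mathlib

open MvPolynomial

/-- The binomial `X^u - X^v`. -/
noncomputable def binom {σ : Type*} (K : Type*) [Field K] (u v : σ →₀ ℕ) :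
    MvPolynomial σ K :=
  MvPolynomial.monomial u 1 - MvPolynomial.monomial v 1

/-- A binomial `X^u - X^v` with `u ≠ v`. -/
def IsBinomial {σ K : Type*} [Field K] (f : MvPolynomial σ K) : Prop :=
  ∃ u v : σ →₀ ℕ, u ≠ v ∧ f = binom K u v

/-- An exponent vector is squarefree if every entry is at most one. -/
def SqfreeExp {σ : Type*} (u : σ →₀ ℕ) : Prop := ∀ i, u i ≤ 1

/-- `f` is a circuit of the ideal `I`: an irreducible binomial in `I` such that no
binomial of `I` has support (set of variables) properly contained in that of `f`. -/
def IsCircuit {σ K : Type*} [Field K] (I : Ideal (MvPolynomial σ K))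
    (f : MvPolynomial σ K) : Prop :=
  IsBinomial f ∧ f ∈ I ∧ Irreducible f ∧
    ∀ g ∈ I, IsBinomial g → ¬ (g.vars ⊂ f.vars)

/-- The set `C_A` of circuits of `I`. -/
def Circuits {σ : Type*} (K : Type*) [Field K] (I : Ideal (MvPolynomial σ K)) :
    Set (MvPolynomial σ K) :=
  {f | IsCircuit I f}

/-- The set `C_A^sf` of circuits of `I` having at least one squarefree monomial. -/
def CircuitsSF {σ : Type*} (K : Type*) [Field K] (I : Ideal (MvPolynomial σ K)) :
    Set (MvPolynomial σ K) :=
  {f | IsCircuit I f ∧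
    ∃ u v : σ →₀ ℕ, u ≠ v ∧ f = binom K u v ∧ (SqfreeExp u ∨ SqfreeExp v)}

/-- The set `C_A^{sf,sf}` of circuits of `I` both of whose monomials are squarefree. -/
def CircuitsSFSF {σ : Type*} (K : Type*) [Field K] (I : Ideal (MvPolynomial σ K)) :
    Set (MvPolynomial σ K) :=
  {f | IsCircuit I f ∧
    ∃ u v : σ →₀ ℕ, u ≠ v ∧ f = binom K u v ∧ (SqfreeExp u ∧ SqfreeExp v)}

/-- The monomial map `x_j ↦ t^{a_j}` into the Laurent polynomial ring
`K[t_1^{±1},…,t_d^{±1}] = K[ℤ^d]`, where `a_j` is the `j`-th column of `A`. -/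
noncomputable def toricMap (K : Type*) [Field K] {d : ℕ} {ι : Type*}
    (A : Matrix (Fin d) ι ℤ) :
    MvPolynomial ι K →ₐ[K] AddMonoidAlgebra K (Fin d → ℤ) :=
  MvPolynomial.aeval fun j => AddMonoidAlgebra.single (fun i => A i j) (1 : K)

/-- The toric ideal `I_A` of the configuration `A`. -/
noncomputable def toricIdeal (K : Type*) [Field K] {d : ℕ} {ι : Type*}
    (A : Matrix (Fin d) ι ℤ) : Ideal (MvPolynomial ι K) :=
  RingHom.ker (toricMap K A).toRingHom

/-- `A` is a configuration: its columns are pairwise distinct and lie on a common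
affine hyperplane not passing through the origin. -/
structure IsConfiguration {d : ℕ} {ι : Type*} (A : Matrix (Fin d) ι ℤ) : Prop where
  injective : Function.Injective fun j i => A i j
  hyperplane : ∃ w : Fin d → ℚ, ∀ j, (∑ i, w i * (A i j : ℚ)) = 1

/-- The configuration `V_2^{(r)}`, with `k`-th column `(r - k, k)ᵀ` for `k = 0, …, r`. -/
def V2config (r : ℕ) : Matrix (Fin 2) (Fin (r + 1)) ℤ :=
  fun i k => if i = 0 then (r : ℤ) - (k : ℤ) else (k : ℤ)

/-!
Index the variables as `x_0, …, x_r`, so that `x_k` corresponds to the column `(r - k, k)`.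
A binomial `x^u - x^v` lies in `I_A` exactly when `u` and `v` have the same degree and the same
weight `∑ k u_k`. Hence `x_0 x_2 - x_1²` lies in `I_A` and uses fewer variables than
`f = x_0 x_3 - x_1 x_2`, so `f` is no circuit. For indispensability, `f` lies in the ideal
generated by any binomial generating set `F`; as every term of an element of `Ideal.span F` is
divisible by a term of some element of `F`, some generator has a monomial dividing `x_0 x_3`.
The proper divisors `1, x_0, x_3` have degree at most one, and a monomial of degree at most one
is determined by its weight, so it is the only monomial in its fibre and occurs in no binomial
of `I_A`. The divisor is therefore `x_0 x_3`, whose fibre (degree 2, weight 3) is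
`{x_0 x_3, x_1 x_2}`, and the generator is `±f`.
-/

section Binomial

variable {σ K : Type*} [Field K]

theorem coeff_binom [DecidableEq σ] (u v c : σ →₀ ℕ) :
    coeff c (binom K u v) = (if u = c then 1 else 0) - (if v = c then 1 else 0) := by
  rw [binom, coeff_sub, coeff_monomial, coeff_monomial]

theorem support_binom [DecidableEq σ] {u v : σ →₀ ℕ} (h : u ≠ v) :
    (binom K u v).support = {u, v} := by
  ext c
  rw [mem_support_iff, coeff_binom, Finset.mem_insert, Finset.mem_singleton]
  by_cases hu : u = c <;> by_cases hv : v = c <;> simp_all [eq_comm]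

theorem vars_binom [DecidableEq σ] {u v : σ →₀ ℕ} (h : u ≠ v) :
    (binom K u v).vars = u.support ∪ v.support := by
  ext i
  simp [mem_vars_iff_mem_support, support_binom h]

theorem neg_binom (u v : σ →₀ ℕ) : -binom K u v = binom K v u :=
  neg_sub _ _

end Binomial

theorem exists_support_le_of_mem_span {σ R : Type*} [CommSemiring R]
    {F : Set (MvPolynomial σ R)} {p : MvPolynomial σ R} (hp : p ∈ Ideal.span F)
    {c : σ →₀ ℕ} (hc : c ∈ p.support) : ∃ g ∈ F, ∃ d ∈ g.support, d ≤ c := by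
  have hspan : Ideal.span F ≤ Ideal.span
      ((fun d => monomial d (1 : R)) '' ⋃ g ∈ F, (g.support : Set (σ →₀ ℕ))) := by
    refine Ideal.span_le.2 fun g hg => ?_
    rw [SetLike.mem_coe, g.as_sum]
    refine Ideal.sum_mem _ fun d hd => ?_
    rw [← mul_one (coeff d g), ← C_mul_monomial]
    exact Ideal.mul_mem_left _ _ (Ideal.subset_span ⟨d, Set.mem_biUnion hg hd, rfl⟩)
  obtain ⟨d, hd, hdc⟩ := mem_ideal_span_monomial_image.1 (hspan hp) c hc
  obtain ⟨g, hg, hdg⟩ := Set.mem_iUnion₂.1 hd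
  exact ⟨g, hg, d, hdg, hdc⟩

section Toric

variable {K : Type*} [Field K]

theorem toricMap_monomial {d : ℕ} {ι : Type*} (A : Matrix (Fin d) ι ℤ) (u : ι →₀ ℕ) :
    toricMap K A (monomial u 1) =
      AddMonoidAlgebra.single (Finsupp.weight (fun j i => A i j) u) 1 := by
  rw [toricMap, aeval_monomial, map_one, one_mul, Finsupp.prod, Finsupp.weight_apply,
    Finsupp.sum]
  simp_rw [AddMonoidAlgebra.single_pow, one_pow]
  rw [AddMonoidAlgebra.prod_single, Finset.prod_const_one]

theorem binom_mem_toricIdeal_iff {d : ℕ} {ι : Type*} (A : Matrix (Fin d) ι ℤ)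
    (u v : ι →₀ ℕ) : binom K u v ∈ toricIdeal K A ↔
      Finsupp.weight (fun j i => A i j) u = Finsupp.weight (fun j i => A i j) v := by
  rw [toricIdeal, RingHom.mem_ker, binom, map_sub, sub_eq_zero, AlgHom.toRingHom_eq_coe,
    RingHom.coe_coe, toricMap_monomial, toricMap_monomial,
    AddMonoidAlgebra.single_left_inj one_ne_zero]

theorem weight_V2config (r : ℕ) (u : Fin (r + 1) →₀ ℕ) :
    Finsupp.weight (fun j i => V2config r i j) u = fun i =>
      if i = 0 then (r : ℤ) * u.degree - Finsupp.weight Fin.val u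
      else (Finsupp.weight Fin.val u : ℤ) := by
  ext i
  simp only [Finsupp.weight_eq_sum, Finsupp.degree_eq_sum, Finset.sum_apply, Pi.smul_apply]
  simp only [V2config, nsmul_eq_mul, smul_eq_mul]
  split_ifs <;> push_cast
  · rw [Finset.mul_sum, ← Finset.sum_sub_distrib]
    exact Finset.sum_congr rfl fun j _ => by ring
  · rfl

theorem binom_mem_toricIdeal_V2config_iff {r : ℕ} (hr : r ≠ 0) (u v : Fin (r + 1) →₀ ℕ) :
    binom K u v ∈ toricIdeal K (V2config r) ↔
      u.degree = v.degree ∧ Finsupp.weight Fin.val u = Finsupp.weight Fin.val v := by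
  rw [binom_mem_toricIdeal_iff, weight_V2config, weight_V2config, funext_iff, Fin.forall_fin_two]
  simp only [Fin.one_eq_zero_iff, Nat.reduceEqDiff, ↓reduceIte, Nat.cast_inj]
  constructor
  · rintro ⟨hdeg, hwt⟩
    rw [hwt, sub_left_inj] at hdeg
    exact ⟨by exact_mod_cast mul_left_cancel₀ (Nat.cast_ne_zero.2 hr) hdeg, hwt⟩
  · rintro ⟨hdeg, hwt⟩
    rw [hdeg, hwt]
    exact ⟨rfl, rfl⟩

end Toric

namespace Finsupp

variable {σ : Type*}

theorem degree_strictMono : StrictMono (degree : (σ →₀ ℕ) → ℕ) := by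
  intro u v huv
  obtain ⟨t, rfl⟩ := le_iff_exists_add.1 huv.le
  have ht : t ≠ 0 := by
    rintro rfl
    simp at huv
  rw [map_add]
  have := (degree_eq_zero_iff t).not.2 ht
  omega

open scoped Pointwise in
theorem exists_eq_single_add_single_of_degree_eq_two {w : σ →₀ ℕ} (h : w.degree = 2) :
    ∃ a b, w = single a 1 + single b 1 := by
  have hw : w ∈ 2 • (single · 1) '' (Set.univ : Set σ) := by
    rw [nsmul_single_one_image]
    simp [h]
  rw [two_nsmul] at hw
  obtain ⟨_, ⟨a, -, rfl⟩, _, ⟨b, -, rfl⟩, hw⟩ := hw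
  exact ⟨a, b, hw.symm⟩

theorem eq_of_degree_le_one {M : Type*} [AddCommMonoid M] {w : σ → M}
    (hw : Function.Injective w) {u v : σ →₀ ℕ} (hdeg : u.degree = v.degree)
    (hwt : weight w u = weight w v) (hu : u.degree ≤ 1) : u = v := by
  obtain hu | hu := Nat.le_one_iff_eq_zero_or_eq_one.1 hu
  · rw [(degree_eq_zero_iff u).1 hu, (degree_eq_zero_iff v).1 (hdeg ▸ hu)]
  · obtain ⟨a, rfl⟩ : u ∈ Set.range (single · 1) := range_single_one ▸ hu
    obtain ⟨b, rfl⟩ : v ∈ Set.range (single · 1) := range_single_one ▸ hdeg.symm.trans hu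
    simp only [weight_single, one_smul] at hwt
    rw [hw hwt]

end Finsupp

theorem binom_mem_or_neg_mem_of_span_eq {σ K : Type*} [Field K] {I : Ideal (MvPolynomial σ K)}
    {u₀ v₀ : σ →₀ ℕ} (hne : u₀ ≠ v₀) (hmem : binom K u₀ v₀ ∈ I)
    (hmin : ∀ {u v}, u ≠ v → binom K u v ∈ I → u ≤ u₀ → u = u₀ ∧ v = v₀)
    {F : Set (MvPolynomial σ K)} (hF : ∀ g ∈ F, IsBinomial g) (hspan : Ideal.span F = I) :
    binom K u₀ v₀ ∈ F ∨ -binom K u₀ v₀ ∈ F := by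
  classical
  have hu₀ : u₀ ∈ (binom K u₀ v₀).support := by simp [support_binom hne]
  obtain ⟨g, hgF, d, hdg, hd⟩ := exists_support_le_of_mem_span (hspan ▸ hmem) hu₀
  obtain ⟨u, v, huv, rfl⟩ := hF g hgF
  have hg : binom K u v ∈ I := hspan ▸ Ideal.subset_span hgF
  have hg' : binom K v u ∈ I := neg_binom (K := K) u v ▸ I.neg_mem hg
  rw [support_binom huv, Finset.mem_insert, Finset.mem_singleton] at hdg
  rcases hdg with rfl | rfl
  · obtain ⟨rfl, rfl⟩ := hmin huv hg hd
    exact Or.inl hgF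
  · obtain ⟨rfl, rfl⟩ := hmin huv.symm hg' hd
    rw [neg_binom]
    exact Or.inr hgF

open Finsupp (single weight)

section Veronese

variable {K : Type*} [Field K] {r : ℕ}

theorem single_zero_add_single_three_ne (hr : 3 ≤ r) :
    (single 0 1 + single 3 1 : Fin (r + 1) →₀ ℕ) ≠ single 1 1 + single 2 1 := fun h => by
  simpa (disch := omega) [Finsupp.single_apply, Fin.ext_iff, Nat.mod_eq_of_lt]
    using DFunLike.congr_fun h 0

theorem eq_or_eq_of_degree_eq_two_of_weight_eq_three (hr : 3 ≤ r) {w : Fin (r + 1) →₀ ℕ}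
    (hdeg : w.degree = 2) (hwt : weight Fin.val w = 3) :
    w = single 0 1 + single 3 1 ∨ w = single 1 1 + single 2 1 := by
  obtain ⟨a, b, rfl⟩ := Finsupp.exists_eq_single_add_single_of_degree_eq_two hdeg
  simp only [map_add, Finsupp.weight_single, smul_eq_mul, one_mul] at hwt
  have hab : (a.val = 0 ∧ b.val = 3) ∨ (a.val = 3 ∧ b.val = 0) ∨
      (a.val = 1 ∧ b.val = 2) ∨ (a.val = 2 ∧ b.val = 1) := by omega
  rcases hab with ⟨ha, hb⟩ | ⟨ha, hb⟩ | ⟨ha, hb⟩ | ⟨ha, hb⟩ <;>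
    [left; left; right; right] <;> ext i <;>
    simp (disch := omega) only [Finsupp.add_apply, Finsupp.single_apply, Fin.ext_iff,
      Fin.coe_ofNat_eq_mod, Nat.mod_eq_of_lt, ha, hb] <;>
    split_ifs <;> omega

theorem eq_of_binom_mem_toricIdeal_V2config_of_le (hr : 3 ≤ r) {u v : Fin (r + 1) →₀ ℕ}
    (huv : u ≠ v) (hmem : binom K u v ∈ toricIdeal K (V2config r))
    (hle : u ≤ single 0 1 + single 3 1) :
    u = single 0 1 + single 3 1 ∧ v = single 1 1 + single 2 1 := by
  obtain ⟨hdeg, hwt⟩ := (binom_mem_toricIdeal_V2config_iff (by omega) u v).1 hmem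
  obtain rfl | hlt := hle.eq_or_lt
  · refine ⟨rfl, (eq_or_eq_of_degree_eq_two_of_weight_eq_three hr ?_ ?_).resolve_left huv.symm⟩
    · rw [← hdeg]
      simp
    · rw [← hwt]
      simp (disch := omega) [Finsupp.weight_single, Nat.mod_eq_of_lt]
  · have := Finsupp.degree_strictMono hlt
    simp only [map_add, Finsupp.degree_single] at this
    exact absurd (Finsupp.eq_of_degree_le_one Fin.val_injective hdeg hwt (by omega)) huv

theorem not_isCircuit_binom_V2config (hr : 3 ≤ r) :
    ¬ IsCircuit (toricIdeal K (V2config r))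
      (binom K (single 0 1 + single 3 1) (single 1 1 + single 2 1)) := by
  rintro ⟨-, -, -, hmin⟩
  have hne₁ : (single 0 1 + single 2 1 : Fin (r + 1) →₀ ℕ) ≠ single 1 2 :=
    fun h => by simpa (disch := omega) [Finsupp.single_apply, Fin.ext_iff, Nat.mod_eq_of_lt]
      using DFunLike.congr_fun h 0
  have hmem₁ : binom K (single 0 1 + single 2 1) (single 1 2) ∈ toricIdeal K (V2config r) :=
    (binom_mem_toricIdeal_V2config_iff (by omega) _ _).2 ⟨by simp,
      by simp (disch := omega) [Finsupp.weight_single, Nat.mod_eq_of_lt]⟩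
  refine hmin _ hmem₁ ⟨_, _, hne₁, rfl⟩ ?_
  rw [vars_binom (single_zero_add_single_three_ne hr), vars_binom hne₁,
    Finset.ssubset_iff_of_subset]
  · refine ⟨3, ?_, ?_⟩ <;>
      simp (disch := omega) [Finsupp.single_apply, Fin.ext_iff, Nat.mod_eq_of_lt]
  · intro i
    simp (disch := omega) only [Finset.mem_union, Finsupp.mem_support_iff, Finsupp.coe_add,
      Pi.add_apply, Finsupp.single_apply, Fin.ext_iff, Fin.coe_ofNat_eq_mod, Nat.mod_eq_of_lt]
    split_ifs <;> omega

end Veronese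

/-- For `r ≥ 3`, the binomial `x_1 x_4 - x_2 x_3` (zero-indexed: `x_0 x_3 - x_1 x_2`)
belongs to the toric ideal of `V_2^{(r)}`, is not a circuit, is the unique binomial of
`I_A` with first monomial `x_1 x_4`, and is indispensable. -/
theorem veronese_binomial_indispensable_not_circuit (r : ℕ) (hr : 3 ≤ r)
    (K : Type*) [Field K] (u₀ v₀ : Fin (r + 1) →₀ ℕ)
    (hu₀ : u₀ = Finsupp.single ⟨0, by omega⟩ 1 + Finsupp.single ⟨3, by omega⟩ 1)
    (hv₀ : v₀ = Finsupp.single ⟨1, by omega⟩ 1 + Finsupp.single ⟨2, by omega⟩ 1) :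
    binom K u₀ v₀ ∈ toricIdeal K (V2config r) ∧
      ¬ IsCircuit (toricIdeal K (V2config r)) (binom K u₀ v₀) ∧
      (∀ w : Fin (r + 1) →₀ ℕ, w ≠ u₀ →
        binom K u₀ w ∈ toricIdeal K (V2config r) → w = v₀) ∧
      (∀ F : Set (MvPolynomial (Fin (r + 1)) K), (∀ g ∈ F, IsBinomial g) →
        Ideal.span F = toricIdeal K (V2config r) →
        binom K u₀ v₀ ∈ F ∨ -(binom K u₀ v₀) ∈ F) := by
  have hk (k : ℕ) (h : k < r + 1) : (⟨k, h⟩ : Fin (r + 1)) = OfNat.ofNat k :=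
    Fin.ext (Nat.mod_eq_of_lt h).symm
  obtain rfl : u₀ = single 0 1 + single 3 1 := by rw [hu₀, hk, hk]
  obtain rfl : v₀ = single 1 1 + single 2 1 := by rw [hv₀, hk, hk]
  have hmem : binom K (single 0 1 + single 3 1) (single 1 1 + single 2 1) ∈
      toricIdeal K (V2config r) :=
    (binom_mem_toricIdeal_V2config_iff (by omega) _ _).2 ⟨by simp,
      by simp (disch := omega) [Finsupp.weight_single, Nat.mod_eq_of_lt]⟩
  exact ⟨hmem, not_isCircuit_binom_V2config hr,
    fun w hw hw₀ => (eq_of_binom_mem_toricIdeal_V2config_of_le hr hw.symm hw₀ le_rfl).2,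
    fun F hF hspan => binom_mem_or_neg_mem_of_span_eq
      (single_zero_add_single_three_ne hr) hmem
      (eq_of_binom_mem_toricIdeal_V2config_of_le hr) hF hspan⟩
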